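/- For all (small) sets L and R of surreal numbers, there exists a surreal number a with l < a for all l ∈ L and a < r for all r ∈ R if and only if l < r holds for all l ∈ L and r ∈ R. In other words, the cut (L|R) is non-empty if and only if L < R. -/

import Mathlib

universe u

namespace SetTheory

/-- Pre-games (as in Mathlib's former `SetTheory.PGame`, removed from Mathlib). -/
inductive PGame : Type (u + 1)
  | mk : ∀ α β : Type u, (α → PGame) → (β → PGame) → PGame

namespace PGame

/-- The pair `(x ≤ y, x ⧏ y)`, defined by the usual simultaneous recursion:
`x ≤ y ↔ (∀ i, xL i ⧏ y) ∧ (∀ j, x ⧏ yR j)` and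
`x ⧏ y ↔ (∃ i, x ≤ yL i) ∨ (∃ j, xR j ≤ y)`. -/
noncomputable def leLF (x : PGame.{u}) : PGame.{u} → Prop × Prop :=
  PGame.rec (motive := fun _ => PGame.{u} → Prop × Prop)
    (fun _ _ _ _ IHl IHr y =>
      PGame.rec (motive := fun _ => Prop × Prop)
        (fun yl yr yL yR JHl JHr =>
          ((∀ i, (IHl i (PGame.mk yl yr yL yR)).2) ∧ (∀ j, (JHr j).2),
            (∃ i, (JHl i).1) ∨ (∃ j, (IHr j (PGame.mk yl yr yL yR)).1)))
        y)
    x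

instance : LE PGame.{u} := ⟨fun x y => (leLF x y).1⟩

/-- As in the former Mathlib preorder on pre-games: `x < y ↔ x ≤ y ∧ ¬ y ≤ x`. -/
instance : LT PGame.{u} := ⟨fun x y => x ≤ y ∧ ¬ y ≤ x⟩

/-- Numeric pre-games, as in the former `SetTheory.PGame.Numeric`. -/
def Numeric : PGame.{u} → Prop
  | ⟨_, _, L, R⟩ => (∀ i j, L i < R j) ∧ (∀ i, Numeric (L i)) ∧ ∀ j, Numeric (R j)

end PGame

end SetTheory

/-- Surreal numbers: numeric pre-games modulo `x ≤ y ∧ y ≤ x` (as the former `Surreal`). -/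
def Surreal : Type (u + 1) :=
  Quot (fun x y : {x : SetTheory.PGame.{u} // SetTheory.PGame.Numeric x} =>
    x.1 ≤ y.1 ∧ y.1 ≤ x.1)

/-- The order of the former `Surreal`, lifted from representatives (it respects equivalence). -/
instance : LT Surreal.{u} :=
  ⟨fun a b => ∃ x y, Quot.mk _ x = a ∧ Quot.mk _ y = b ∧ x.1 < y.1⟩

/-! If `L < R`, the pre-game `{L | R}` whose options are representatives of the elements of
`L` and `R` is numeric, and a numeric game lies strictly between its left and right options,
so its class lies in the cut `(L|R)`. The converse is transitivity of `<`. -/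

namespace SetTheory
namespace PGame

def LeftMoves : PGame.{u} → Type u
  | mk l _ _ _ => l

def RightMoves : PGame.{u} → Type u
  | mk _ r _ _ => r

def moveLeft : (x : PGame.{u}) → LeftMoves x → PGame.{u}
  | mk _ _ L _ => L

def moveRight : (x : PGame.{u}) → RightMoves x → PGame.{u}
  | mk _ _ _ R => R

def LF (x y : PGame.{u}) : Prop := (leLF x y).2

infix:50 " ⧏ " => LF

variable {x y z : PGame.{u}}

theorem le_iff_forall_lf : x ≤ y ↔ (∀ i, x.moveLeft i ⧏ y) ∧ ∀ j, x ⧏ y.moveRight j := by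
  cases x; cases y; exact Iff.rfl

theorem lf_iff_exists_le : x ⧏ y ↔ (∃ i, x ≤ y.moveLeft i) ∨ ∃ j, x.moveRight j ≤ y := by
  cases x; cases y; exact Iff.rfl

theorem moveLeft_lf_of_le (h : x ≤ y) (i : x.LeftMoves) : x.moveLeft i ⧏ y :=
  (le_iff_forall_lf.1 h).1 i

theorem lf_moveRight_of_le (h : x ≤ y) (j : y.RightMoves) : x ⧏ y.moveRight j :=
  (le_iff_forall_lf.1 h).2 j

theorem lf_of_le_moveLeft {i : y.LeftMoves} (h : x ≤ y.moveLeft i) : x ⧏ y :=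
  lf_iff_exists_le.2 (Or.inl ⟨i, h⟩)

theorem lf_of_moveRight_le {j : x.RightMoves} (h : x.moveRight j ≤ y) : x ⧏ y :=
  lf_iff_exists_le.2 (Or.inr ⟨j, h⟩)

theorem le_iff_not_lf_aux (x y : PGame.{u}) :
    (x ≤ y ↔ ¬ y ⧏ x) ∧ (y ≤ x ↔ ¬ x ⧏ y) := by
  induction x generalizing y with
  | mk xl xr xL xR IHxl IHxr =>
    induction y with
    | mk yl yr yL yR IHyl IHyr =>
      constructor
      · rw [le_iff_forall_lf, lf_iff_exists_le]
        simp only [not_or, not_exists]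
        exact and_congr (forall_congr' fun i => iff_not_comm.2 (IHxl i _).2)
          (forall_congr' fun j => iff_not_comm.2 (IHyr j).2)
      · rw [le_iff_forall_lf, lf_iff_exists_le]
        simp only [not_or, not_exists]
        exact and_congr (forall_congr' fun i => iff_not_comm.2 (IHyl i).1)
          (forall_congr' fun j => iff_not_comm.2 (IHxr j _).1)

theorem not_le : ¬ x ≤ y ↔ y ⧏ x := by
  rw [(le_iff_not_lf_aux x y).1, not_not]

protected theorem le_refl (x : PGame.{u}) : x ≤ x := by
  induction x with
  | mk xl xr xL xR IHl IHr =>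
    exact le_iff_forall_lf.2
      ⟨fun i => lf_of_le_moveLeft (IHl i), fun j => lf_of_moveRight_le (IHr j)⟩

theorem le_trans_aux
    (h₁ : ∀ {i}, y ≤ z → z ≤ x.moveLeft i → y ≤ x.moveLeft i)
    (h₂ : ∀ {j}, z.moveRight j ≤ x → x ≤ y → z.moveRight j ≤ y)
    (hxy : x ≤ y) (hyz : y ≤ z) : x ≤ z :=
  le_iff_forall_lf.2
    ⟨fun i => not_le.1 fun hzx => not_le.2 (moveLeft_lf_of_le hxy i) (h₁ hyz hzx),
      fun j => not_le.1 fun hzx => not_le.2 (lf_moveRight_of_le hyz j) (h₂ hzx hxy)⟩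

/-- The three rotations of transitivity are proved together: each feeds the others'
induction hypotheses (as do the two halves of `le_iff_not_lf_aux`). -/
theorem le_trans_rotations (x y z : PGame.{u}) :
    (x ≤ y → y ≤ z → x ≤ z) ∧ (y ≤ z → z ≤ x → y ≤ x) ∧ (z ≤ x → x ≤ y → z ≤ y) := by
  induction x generalizing y z with
  | mk xl xr xL xR IHxl IHxr =>
    induction y generalizing z with
    | mk yl yr yL yR IHyl IHyr =>
      induction z with
      | mk zl zr zL zR IHzl IHzr =>
        exact ⟨le_trans_aux (fun {i} => (IHxl i _ _).2.1) (fun {j} => (IHzr j).2.2),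
          le_trans_aux (fun {i} => (IHyl i _).2.2) (fun {j} => (IHxr j _ _).1),
          le_trans_aux (fun {i} => (IHzl i).1) (fun {j} => (IHyr j _).2.1)⟩

instance : Preorder PGame.{u} where
  le := (· ≤ ·)
  lt := (· < ·)
  le_refl := PGame.le_refl
  le_trans x y z := (le_trans_rotations x y z).1
  lt_iff_le_not_ge _ _ := Iff.rfl

theorem numeric_def : Numeric x ↔ (∀ i j, x.moveLeft i < x.moveRight j) ∧
    (∀ i, Numeric (x.moveLeft i)) ∧ ∀ j, Numeric (x.moveRight j) := by
  cases x; exact Iff.rfl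

theorem Numeric.moveLeft_le_and_le_moveRight (hx : Numeric x) :
    (∀ i, x.moveLeft i ≤ x) ∧ ∀ j, x ≤ x.moveRight j := by
  induction x with
  | mk xl xr xL xR IHl IHr =>
    obtain ⟨hLR, hL, hR⟩ := numeric_def.1 hx
    refine ⟨fun i => le_iff_forall_lf.2 ⟨fun i' => ?_, fun j => ?_⟩,
      fun j => le_iff_forall_lf.2 ⟨fun i => ?_, fun j' => ?_⟩⟩
    · exact lf_of_le_moveLeft ((IHl i (hL i)).1 i')
    · exact not_le.1 (hLR i j).not_ge
    · exact not_le.1 (hLR i j).not_ge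
    · exact lf_of_moveRight_le ((IHr j (hR j)).2 j')

theorem Numeric.moveLeft_lt (hx : Numeric x) (i : x.LeftMoves) : x.moveLeft i < x :=
  lt_of_le_not_ge (hx.moveLeft_le_and_le_moveRight.1 i) (not_le.2 (lf_of_le_moveLeft le_rfl))

theorem Numeric.lt_moveRight (hx : Numeric x) (j : x.RightMoves) : x < x.moveRight j :=
  lt_of_le_not_ge (hx.moveLeft_le_and_le_moveRight.2 j) (not_le.2 (lf_of_moveRight_le le_rfl))

end PGame
end SetTheory

namespace Surreal

open SetTheory PGame

theorem equivalence_rel :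
    Equivalence (fun x y : {x : PGame.{u} // Numeric x} => x.1 ≤ y.1 ∧ y.1 ≤ x.1) :=
  ⟨fun _ => ⟨le_rfl, le_rfl⟩, And.symm, fun h₁ h₂ => ⟨h₁.1.trans h₂.1, h₂.2.trans h₁.2⟩⟩

theorem lt_iff_out_lt {a b : Surreal.{u}} : a < b ↔ (Quot.out a).1 < (Quot.out b).1 := by
  refine ⟨fun ⟨x, y, hx, hy, hxy⟩ => ?_, fun h => ⟨_, _, Quot.out_eq a, Quot.out_eq b, h⟩⟩
  have hxa := equivalence_rel.eqvGen_iff.1 (Quot.eqvGen_exact (hx.trans (Quot.out_eq a).symm))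
  have hyb := equivalence_rel.eqvGen_iff.1 (Quot.eqvGen_exact (hy.trans (Quot.out_eq b).symm))
  exact lt_of_le_of_lt hxa.2 (lt_of_lt_of_le hxy hyb.1)

protected theorem lt_trans {a b c : Surreal.{u}} (hab : a < b) (hbc : b < c) : a < c :=
  lt_iff_out_lt.2 ((lt_iff_out_lt.1 hab).trans (lt_iff_out_lt.1 hbc))

theorem exists_between_of_forall_lt {ι κ : Type u} (L : ι → Surreal.{u}) (R : κ → Surreal.{u})
    (h : ∀ i j, L i < R j) : ∃ a : Surreal.{u}, (∀ i, L i < a) ∧ ∀ j, a < R j := by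
  let x := PGame.mk ι κ (fun i => (Quot.out (L i)).1) (fun j => (Quot.out (R j)).1)
  have hx : Numeric x :=
    ⟨fun i j => lt_iff_out_lt.1 (h i j), fun i => (Quot.out (L i)).2, fun j => (Quot.out (R j)).2⟩
  exact ⟨Quot.mk _ ⟨x, hx⟩, fun i => ⟨_, _, Quot.out_eq _, rfl, hx.moveLeft_lt i⟩,
    fun j => ⟨_, _, rfl, Quot.out_eq _, hx.lt_moveRight j⟩⟩

end Surreal

/-- The surreal line is a class-sized saturated linear order: for small sets `L, R` of
surreal numbers, the cut `(L|R)` is non-empty if and only if `L < R`. -/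
theorem exists_mem_cut_iff (L R : Set Surreal.{u}) [Small.{u} L] [Small.{u} R] :
    (∃ a : Surreal, (∀ l ∈ L, l < a) ∧ ∀ r ∈ R, a < r) ↔
      ∀ l ∈ L, ∀ r ∈ R, l < r := by
  refine ⟨fun ⟨a, hL, hR⟩ l hl r hr => Surreal.lt_trans (hL l hl) (hR r hr), fun h => ?_⟩
  obtain ⟨a, hLa, haR⟩ := Surreal.exists_between_of_forall_lt
    (fun i : Shrink.{u} L => ((equivShrink L).symm i : Surreal.{u}))
    (fun j : Shrink.{u} R => ((equivShrink R).symm j : Surreal.{u}))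
    (fun i j => h _ ((equivShrink L).symm i).2 _ ((equivShrink R).symm j).2)
  refine ⟨a, fun l hl => ?_, fun r hr => ?_⟩
  · simpa using hLa (equivShrink L ⟨l, hl⟩)
  · simpa using haR (equivShrink R ⟨r, hr⟩)
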